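/- Let v_h(t,x) = e^{i x·ξ/h^α} Σ_{j=0}^N φ_j(t,x) e^{−i𝓑(t)/h^β} h^{jβ}, with 𝓑 ∈ C^∞, Im 𝓑 ≤ 0, 𝓑(0) = 0, φ_j ∈ C₀^∞(ℝ × ℝⁿ), and φ₀(0,0) ≠ 0. Then there exist c > 0 and h₀ > 0 such that ‖v_h‖_{L²} ≥ c·h^{(nα+β)/2} for all 0 < h < h₀. -/

import Mathlib

open MeasureTheory

/-- for v_h(t,x) = e^{ix·ξ/h^α} Σ_{j=0}^N φ_j(t,x) e^{−i𝓑(t)/h^β} h^{jβ}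
with Im 𝓑 ≤ 0, 𝓑(0) = 0 and φ₀(0,0) ≠ 0, there are c > 0 and h₀ > 0 with
‖v_h‖_{L²} ≥ c h^{(nα+β)/2} for 0 < h < h₀. -/
theorem stmt_8 (n N : ℕ) (α β : ℝ) (hα : 0 < α) (hβ : 0 < β)
    (ξ : Fin n → ℝ)
    (𝓑 : ℝ → ℂ) (h𝓑 : ContDiff ℝ (⊤ : ℕ∞) 𝓑) (h𝓑im : ∀ t, (𝓑 t).im ≤ 0)
    (h𝓑0 : 𝓑 0 = 0)
    (φ : ℕ → (ℝ × (Fin n → ℝ)) → ℂ)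
    (hφ : ∀ j, ContDiff ℝ (⊤ : ℕ∞) (φ j)) (hφc : ∀ j, HasCompactSupport (φ j))
    (hφ0 : φ 0 (0, fun _ => 0) ≠ 0)
    (v : ℝ → (ℝ × (Fin n → ℝ)) → ℂ)
    (hv : ∀ h : ℝ, v h = fun p =>
      Complex.exp (Complex.I * ((∑ i, p.2 i * ξ i : ℝ) : ℂ) / ((h ^ α : ℝ) : ℂ)) *
        ∑ j ∈ Finset.range (N + 1),
          φ j p * Complex.exp (-Complex.I * 𝓑 p.1 / ((h ^ β : ℝ) : ℂ))
            * ((h ^ ((j : ℝ) * β) : ℝ) : ℂ)) :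
    ∃ c > 0, ∃ h₀ > 0, ∀ h : ℝ, 0 < h → h < h₀ →
      ENNReal.ofReal (c * h ^ (((n : ℝ) * α + β) / 2))
        ≤ eLpNorm (v h) 2 volume := by
  classical
  have ha : 0 < ‖φ 0 (0, fun _ => 0)‖ := norm_pos_iff.mpr hφ0
  set a : ℝ := ‖φ 0 (0, fun _ => 0)‖ with haa
  -- uniform bound on the φ j
  have hMj : ∀ j, ∃ Mj : ℝ, ∀ p, ‖φ j p‖ ≤ Mj := fun j =>
    ((hφ j).continuous).bounded_above_of_compact_support (hφc j)
  choose Mj hMj' using hMj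
  set M : ℝ := ∑ j ∈ Finset.range (N + 1), Mj j with hMdef
  have hMj_nonneg : ∀ j, 0 ≤ Mj j := fun j =>
    le_trans (norm_nonneg _) (hMj' j (0, fun _ => 0))
  have hM_nonneg : 0 ≤ M := Finset.sum_nonneg fun j _ => hMj_nonneg j
  have hMle : ∀ j ∈ Finset.range (N + 1), ∀ p, ‖φ j p‖ ≤ M := fun j hj p =>
    le_trans (hMj' j p) (Finset.single_le_sum (fun i _ => hMj_nonneg i) hj)
  -- continuity radius
  obtain ⟨δ, hδpos, hδ⟩ := Metric.continuousAt_iff.mp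
    ((hφ 0).continuous.continuousAt (x := (0, fun _ => 0))) (a / 2) (by positivity)
  -- Lipschitz bound for Im 𝓑 near 0
  have hfim : ContDiff ℝ (⊤ : ℕ∞) (fun t => (𝓑 t).im) := Complex.imCLM.contDiff.comp h𝓑
  obtain ⟨K, U, hU, hK⟩ :=
    ((hfim.contDiffAt (x := 0)).of_le (by simp)).exists_lipschitzOnWith
  obtain ⟨δ₂, hδ₂pos, hball⟩ := Metric.mem_nhds_iff.mp hU
  have h0U : (0 : ℝ) ∈ U := mem_of_mem_nhds hU
  set r : ℝ := δ / 2 with hrdef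
  have hr : 0 < r := half_pos hδpos
  have hNM : (0 : ℝ) < (N : ℝ) * M + 1 := by positivity
  set ε : ℝ := min (δ / 2) (min (δ₂ / 2) (a / (4 * ((N : ℝ) * M + 1)))) with hεdef
  have hε : 0 < ε := by
    refine lt_min (half_pos hδpos) (lt_min (half_pos hδ₂pos) ?_)
    positivity
  set c₁ : ℝ := Real.exp (-(K : ℝ)) * (a / 4) with hc₁def
  have hc₁ : 0 < c₁ := by positivity
  refine ⟨c₁ * Real.sqrt (2 * (2 * r) ^ n), by positivity,
    min 1 (ε ^ (1 / β : ℝ)), lt_min one_pos (Real.rpow_pos_of_pos hε _), ?_⟩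
  intro h hh hh'
  have hh1 : h < 1 := lt_of_lt_of_le hh' (min_le_left _ _)
  have hhβpos : 0 < h ^ β := Real.rpow_pos_of_pos hh β
  have hhβε : h ^ β < ε := by
    have h2 : (ε ^ (1 / β : ℝ)) ^ β = ε := by
      rw [← Real.rpow_mul hε.le, one_div, inv_mul_cancel₀ hβ.ne', Real.rpow_one]
    have h3 : h ^ β < (ε ^ (1 / β : ℝ)) ^ β :=
      Real.rpow_lt_rpow hh.le (lt_of_lt_of_le hh' (min_le_right _ _)) hβ
    rwa [h2] at h3
  set S : Set (ℝ × (Fin n → ℝ)) :=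
    Set.Icc (-(h ^ β)) (h ^ β) ×ˢ Set.Icc (fun _ => -r) (fun _ => r) with hSdef
  have hSmeas : MeasurableSet S := measurableSet_Icc.prod measurableSet_Icc
  -- pointwise lower bound on S
  have hpt : ∀ p ∈ S, c₁ ≤ ‖v h p‖ := by
    rintro ⟨t, x⟩ hp
    obtain ⟨hpt1, hpt2⟩ := hp
    have htabs : |t| ≤ h ^ β := abs_le.mpr hpt1
    have hxabs : ∀ i, |x i| ≤ r := fun i => abs_le.mpr ⟨hpt2.1 i, hpt2.2 i⟩
    have hβδ : h ^ β ≤ δ / 2 := le_trans hhβε.le (min_le_left _ _)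
    have hβδ₂ : h ^ β ≤ δ₂ / 2 :=
      le_trans hhβε.le (le_trans (min_le_right _ _) (min_le_left _ _))
    have hβa : h ^ β ≤ a / (4 * ((N : ℝ) * M + 1)) :=
      le_trans hhβε.le (le_trans (min_le_right _ _) (min_le_right _ _))
    -- φ₀ lower bound
    have hdist : dist ((t, x) : ℝ × (Fin n → ℝ)) (0, fun _ => 0) < δ := by
      rw [Prod.dist_eq, max_lt_iff]
      constructor
      · rw [Real.dist_eq, sub_zero]
        calc |t| ≤ h ^ β := htabs
          _ ≤ δ / 2 := hβδ
          _ < δ := half_lt_self hδpos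
      · refine lt_of_le_of_lt ((dist_pi_le_iff hr.le).mpr fun i => ?_)
          (by rw [hrdef]; linarith)
        rw [Real.dist_eq, sub_zero]
        exact hxabs i
    have hφ0p : a / 2 ≤ ‖φ 0 (t, x)‖ := by
      have h1 : dist (φ 0 (t, x)) (φ 0 (0, fun _ => 0)) < a / 2 := hδ hdist
      have h2 : ‖φ 0 (0, fun _ => 0)‖ - ‖φ 0 (t, x)‖
          ≤ ‖φ 0 (0, fun _ => 0) - φ 0 (t, x)‖ := norm_sub_norm_le _ _
      rw [dist_eq_norm, norm_sub_rev] at h1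
      rw [← haa] at h2
      linarith
    -- imaginary part lower bound
    have htU : t ∈ U := by
      apply hball
      rw [Metric.mem_ball, Real.dist_eq, sub_zero]
      calc |t| ≤ h ^ β := htabs
        _ ≤ δ₂ / 2 := hβδ₂
        _ < δ₂ := half_lt_self hδ₂pos
    have hIm : -((K : ℝ) * h ^ β) ≤ (𝓑 t).im := by
      have h1 := hK.dist_le_mul t htU 0 h0U
      rw [h𝓑0, Complex.zero_im, Real.dist_eq, sub_zero, Real.dist_eq, sub_zero] at h1
      have h2 : |((𝓑 t).im)| ≤ (K : ℝ) * h ^ β :=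
        le_trans h1 (mul_le_mul_of_nonneg_left htabs (K.coe_nonneg))
      have := abs_le.mp h2
      linarith [this.1]
    rw [hv]
    dsimp only
    have hsum : ∑ j ∈ Finset.range (N + 1),
        φ j (t, x) * Complex.exp (-Complex.I * 𝓑 t / ((h ^ β : ℝ) : ℂ))
          * ((h ^ ((j : ℝ) * β) : ℝ) : ℂ)
        = Complex.exp (-Complex.I * 𝓑 t / ((h ^ β : ℝ) : ℂ)) *
          ∑ j ∈ Finset.range (N + 1), φ j (t, x) * ((h ^ ((j : ℝ) * β) : ℝ) : ℂ) := by
      rw [Finset.mul_sum]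
      exact Finset.sum_congr rfl fun j _ => by ring
    rw [hsum, norm_mul, norm_mul]
    have h1 : ‖Complex.exp (Complex.I * ((∑ i, x i * ξ i : ℝ) : ℂ) / ((h ^ α : ℝ) : ℂ))‖ = 1 := by
      rw [Complex.norm_exp]
      simp [Complex.div_ofReal_re, Complex.mul_re]
    have hE : Real.exp (-(K : ℝ)) ≤
        ‖Complex.exp (-Complex.I * 𝓑 t / ((h ^ β : ℝ) : ℂ))‖ := by
      rw [Complex.norm_exp]
      apply Real.exp_le_exp.mpr
      have hre : (-Complex.I * 𝓑 t / ((h ^ β : ℝ) : ℂ)).re = (𝓑 t).im / h ^ β := by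
        rw [Complex.div_ofReal_re]
        congr 1
        simp [Complex.mul_re]
      rw [hre, le_div_iff₀ hhβpos]
      calc -(K : ℝ) * h ^ β = -((K : ℝ) * h ^ β) := by ring
        _ ≤ (𝓑 t).im := hIm
    have hSig : a / 4 ≤ ‖∑ j ∈ Finset.range (N + 1),
        φ j (t, x) * ((h ^ ((j : ℝ) * β) : ℝ) : ℂ)‖ := by
      rw [← Finset.add_sum_erase _ _ (Finset.mem_range.mpr (Nat.succ_pos N))]
      have hhead : ((h ^ (((0 : ℕ) : ℝ) * β) : ℝ) : ℂ) = 1 := by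
        norm_num
      have htail : ‖∑ j ∈ (Finset.range (N + 1)).erase 0,
          φ j (t, x) * ((h ^ ((j : ℝ) * β) : ℝ) : ℂ)‖ ≤ a / 4 := by
        calc ‖∑ j ∈ (Finset.range (N + 1)).erase 0,
            φ j (t, x) * ((h ^ ((j : ℝ) * β) : ℝ) : ℂ)‖
            ≤ ∑ j ∈ (Finset.range (N + 1)).erase 0,
              ‖φ j (t, x) * ((h ^ ((j : ℝ) * β) : ℝ) : ℂ)‖ := norm_sum_le _ _
          _ ≤ ∑ _j ∈ (Finset.range (N + 1)).erase 0, M * h ^ β := by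
              apply Finset.sum_le_sum
              intro j hj
              rw [norm_mul, Complex.norm_real, Real.norm_eq_abs,
                abs_of_nonneg (Real.rpow_nonneg hh.le _)]
              have hj1 : (1 : ℝ) ≤ (j : ℝ) := by
                have := Nat.one_le_iff_ne_zero.mpr (Finset.ne_of_mem_erase hj)
                exact_mod_cast this
              have hjr : j ∈ Finset.range (N + 1) := Finset.mem_of_mem_erase hj
              have hle : h ^ ((j : ℝ) * β) ≤ h ^ β := by
                apply Real.rpow_le_rpow_of_exponent_ge hh hh1.le
                nlinarith
              exact mul_le_mul (hMle j hjr (t, x)) hle (Real.rpow_nonneg hh.le _)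
                (le_trans (norm_nonneg _) (hMle j hjr (t, x)))
          _ = (N : ℝ) * (M * h ^ β) := by
              rw [Finset.sum_const, Finset.card_erase_of_mem
                (Finset.mem_range.mpr (Nat.succ_pos N)), Finset.card_range,
                ]
              simp [nsmul_eq_mul]
          _ ≤ a / 4 := by
              have h1 : (N : ℝ) * (M * h ^ β) ≤ ((N : ℝ) * M + 1) * h ^ β := by
                nlinarith [hhβpos.le]
              have h2 : ((N : ℝ) * M + 1) * h ^ β
                  ≤ ((N : ℝ) * M + 1) * (a / (4 * ((N : ℝ) * M + 1))) :=
                mul_le_mul_of_nonneg_left hβa hNM.le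
              have h3 : ((N : ℝ) * M + 1) * (a / (4 * ((N : ℝ) * M + 1))) = a / 4 := by
                field_simp
              linarith
      rw [hhead, mul_one]
      set w : ℂ := ∑ j ∈ (Finset.range (N + 1)).erase 0,
        φ j (t, x) * ((h ^ ((j : ℝ) * β) : ℝ) : ℂ) with hwdef
      have key : ‖φ 0 (t, x)‖ ≤ ‖φ 0 (t, x) + w‖ + ‖w‖ := by
        have := norm_sub_le (φ 0 (t, x) + w) w
        simpa using this
      linarith
    rw [h1, one_mul]
    calc c₁ = Real.exp (-(K : ℝ)) * (a / 4) := rfl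
      _ ≤ ‖Complex.exp (-Complex.I * 𝓑 t / ((h ^ β : ℝ) : ℂ))‖ *
          ‖∑ j ∈ Finset.range (N + 1), φ j (t, x) * ((h ^ ((j : ℝ) * β) : ℝ) : ℂ)‖ :=
        mul_le_mul hE hSig (by positivity) (norm_nonneg _)
  -- compare with indicator
  have hmono : eLpNorm (S.indicator fun _ => c₁) 2 volume ≤ eLpNorm (v h) 2 volume := by
    apply eLpNorm_mono
    intro p
    by_cases hp : p ∈ S
    · rw [Set.indicator_of_mem hp, Real.norm_eq_abs, abs_of_nonneg hc₁.le]
      exact hpt p hp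
    · rw [Set.indicator_of_notMem hp]
      simpa using norm_nonneg _
  have hind : eLpNorm (S.indicator fun _ => c₁) 2 volume
      = (‖c₁‖₊ : ENNReal) * (volume S) ^ (1 / (2 : ℝ)) := by
    rw [eLpNorm_indicator_const hSmeas two_ne_zero ENNReal.ofNat_ne_top]
    norm_num
    rfl
  have hvol : volume S = ENNReal.ofReal (2 * h ^ β * (2 * r) ^ n) := by
    rw [hSdef]
    calc volume (Set.Icc (-(h ^ β)) (h ^ β) ×ˢ
          Set.Icc ((fun _ => -r) : Fin n → ℝ) (fun _ => r))
        = volume (Set.Icc (-(h ^ β)) (h ^ β)) *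
          volume (Set.Icc ((fun _ => -r) : Fin n → ℝ) (fun _ => r)) := by
          rw [Measure.volume_eq_prod, Measure.prod_prod]
      _ = ENNReal.ofReal (2 * h ^ β) * ENNReal.ofReal ((2 * r) ^ n) := by
          rw [Real.volume_Icc, Real.volume_Icc_pi]
          congr 1
          · congr 1; ring
          · rw [Finset.prod_const, Finset.card_univ, Fintype.card_fin,
              ← ENNReal.ofReal_pow (by linarith : (0:ℝ) ≤ r - -r)]
            congr 1
            ring
      _ = ENNReal.ofReal (2 * h ^ β * (2 * r) ^ n) :=
          (ENNReal.ofReal_mul (by positivity)).symm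
  refine le_trans ?_ hmono
  rw [hind, hvol, ← enorm_eq_nnnorm, Real.enorm_eq_ofReal hc₁.le,
    ENNReal.ofReal_rpow_of_pos (by positivity), ← ENNReal.ofReal_mul hc₁.le]
  apply ENNReal.ofReal_le_ofReal
  have hrw : (2 * h ^ β * (2 * r) ^ n) ^ (1 / (2 : ℝ))
      = Real.sqrt (2 * (2 * r) ^ n) * h ^ (β / 2) := by
    have e1 : 2 * h ^ β * (2 * r) ^ n = (2 * (2 * r) ^ n) * h ^ β := by ring
    rw [e1, Real.mul_rpow (by positivity) hhβpos.le, ← Real.rpow_mul hh.le,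
      Real.sqrt_eq_rpow]
    congr 1
    ring
  rw [hrw]
  have hexp : h ^ (((n : ℝ) * α + β) / 2) ≤ h ^ (β / 2) := by
    apply Real.rpow_le_rpow_of_exponent_ge hh hh1.le
    have : (0 : ℝ) ≤ (n : ℝ) * α := by positivity
    linarith
  calc c₁ * Real.sqrt (2 * (2 * r) ^ n) * h ^ (((n : ℝ) * α + β) / 2)
      ≤ c₁ * Real.sqrt (2 * (2 * r) ^ n) * h ^ (β / 2) := by
        apply mul_le_mul_of_nonneg_left hexp (by positivity)
    _ = c₁ * (Real.sqrt (2 * (2 * r) ^ n) * h ^ (β / 2)) := by ring
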